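/- Let H be a complex Hilbert space, let V : H → H be a bounded linear operator that is an isometry (‖Vx‖ = ‖x‖ for all x ∈ H), and let λ_1, …, λ_d ∈ ℂ with |λ_j| < 1 for each j. Define the Blaschke operator B(V*) := ∏_{j=1}^d (V* + λ_j·1)(1 + conj(λ_j)V*)⁻¹ and the operators E_j(V*) := (1 - |λ_j|²)^{1/2} · (1 + conj(λ_j)V*)⁻¹ · ∏_{k=1}^{j-1} (V* + λ_k·1)(1 + conj(λ_k)V*)⁻¹ for j = 1, …, d. Then 1 - B(V*)*·B(V*) = Σ_{j=1}^d E_j(V*)* · (1 - V·V*) · E_j(V*). -/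

import Mathlib

/-- The factor `(V* + λ·1)(1 + conj(λ)V*)⁻¹` of a Blaschke operator. -/
noncomputable def blaschkeFactor {H : Type*} [NormedAddCommGroup H] [InnerProductSpace ℂ H]
    [CompleteSpace H] (V : H →L[ℂ] H) (l : ℂ) : H →L[ℂ] H :=
  (ContinuousLinearMap.adjoint V + l • (1 : H →L[ℂ] H)) *
    Ring.inverse ((1 : H →L[ℂ] H) + (starRingEnd ℂ) l • ContinuousLinearMap.adjoint V)

/-- The Blaschke operator `B(V*) = ∏_j (V* + λ_j·1)(1 + conj(λ_j)V*)⁻¹`. -/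
noncomputable def blaschkeOp {H : Type*} [NormedAddCommGroup H] [InnerProductSpace ℂ H]
    [CompleteSpace H] (V : H →L[ℂ] H) {d : ℕ} (lam : Fin d → ℂ) : H →L[ℂ] H :=
  (List.ofFn fun j => blaschkeFactor V (lam j)).prod

/-- The Malmquist–Takenaka operator
`E_j(V*) = (1-|λ_j|²)^{1/2}·(1 + conj(λ_j)V*)⁻¹·∏_{k<j}(V* + λ_k·1)(1 + conj(λ_k)V*)⁻¹`. -/
noncomputable def mtOp {H : Type*} [NormedAddCommGroup H] [InnerProductSpace ℂ H]
    [CompleteSpace H] (V : H →L[ℂ] H) {d : ℕ} (lam : Fin d → ℂ) (j : Fin d) : H →L[ℂ] H :=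
  (Real.sqrt (1 - ‖lam j‖ ^ 2) : ℂ) •
    (Ring.inverse ((1 : H →L[ℂ] H) + (starRingEnd ℂ) (lam j) • ContinuousLinearMap.adjoint V) *
      (List.ofFn fun k : Fin j.val => blaschkeFactor V (lam (Fin.castLE j.isLt.le k))).prod)


-- helper: star of Ring.inverse of a unit
lemma star_ringInverse {R : Type*} [Ring R] [StarRing R] {x : R} (h : IsUnit x) :
    star (Ring.inverse x) = Ring.inverse (star x) := by
  have h1 : star x * star (Ring.inverse x) = 1 := by
    rw [← star_mul, Ring.inverse_mul_cancel _ h, star_one]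
  have h2 : star (Ring.inverse x) * star x = 1 := by
    rw [← star_mul, Ring.mul_inverse_cancel _ h, star_one]
  let w : Rˣ := ⟨star x, star (Ring.inverse x), h1, h2⟩
  have : star x = (w : R) := rfl
  rw [this, Ring.inverse_unit]
  rfl

lemma commute_ringInverse {R : Type*} [Ring R] {a x : R} (h : IsUnit x) (hc : Commute a x) :
    Commute a (Ring.inverse x) := by
  rcases h with ⟨u, rfl⟩
  rw [Ring.inverse_unit]
  exact hc.units_inv_right

section
variable {H : Type*} [NormedAddCommGroup H] [InnerProductSpace ℂ H] [CompleteSpace H]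

lemma isUnit_D (V : H →L[ℂ] H) (hV : ∀ x, ‖V x‖ = ‖x‖) (c : ℂ) (hc : ‖c‖ < 1) :
    IsUnit ((1 : H →L[ℂ] H) + c • ContinuousLinearMap.adjoint V) := by
  have hVn : ‖V‖ ≤ 1 := V.opNorm_le_bound zero_le_one (fun x => by rw [hV, one_mul])
  have hA : ‖ContinuousLinearMap.adjoint V‖ ≤ 1 := by
    rw [← ContinuousLinearMap.star_eq_adjoint, norm_star]; exact hVn
  have hn : ‖-(c • ContinuousLinearMap.adjoint V)‖ < 1 := by
    rw [norm_neg, norm_smul]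
    calc ‖c‖ * ‖ContinuousLinearMap.adjoint V‖ ≤ ‖c‖ * 1 :=
          mul_le_mul_of_nonneg_left hA (norm_nonneg _)
      _ < 1 := by rwa [mul_one]
  have := (Units.oneSub _ hn).isUnit
  rwa [Units.val_oneSub, sub_neg_eq_add] at this

lemma commute_blaschkeFactor (V : H →L[ℂ] H) (hV : ∀ x, ‖V x‖ = ‖x‖) (l : ℂ) (hl : ‖l‖ < 1)
    {x : H →L[ℂ] H} (hx : Commute x (ContinuousLinearMap.adjoint V)) :
    Commute x (blaschkeFactor V l) := by
  have hc : ‖(starRingEnd ℂ) l‖ < 1 := by rwa [RCLike.norm_conj]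
  have h1 : Commute x (ContinuousLinearMap.adjoint V + l • (1 : H →L[ℂ] H)) :=
    hx.add_right ((Commute.one_right x).smul_right l)
  have h2 : Commute x ((1 : H →L[ℂ] H) + (starRingEnd ℂ) l • ContinuousLinearMap.adjoint V) :=
    (Commute.one_right x).add_right (hx.smul_right _)
  exact h1.mul_right (commute_ringInverse (isUnit_D V hV _ hc) h2)

lemma blaschkeFactor_comm (V : H →L[ℂ] H) (hV : ∀ x, ‖V x‖ = ‖x‖) (l l' : ℂ)
    (hl : ‖l‖ < 1) (hl' : ‖l'‖ < 1) :
    Commute (blaschkeFactor V l) (blaschkeFactor V l') := by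
  exact commute_blaschkeFactor V hV l' hl'
    ((commute_blaschkeFactor V hV l hl (Commute.refl _)).symm)

lemma key_factor (V : H →L[ℂ] H) (hV : ∀ x, ‖V x‖ = ‖x‖) (l : ℂ) (hl : ‖l‖ < 1) :
    1 - star (blaschkeFactor V l) * blaschkeFactor V l =
      ((1 - ‖l‖ ^ 2 : ℝ) : ℂ) •
        (star (Ring.inverse ((1 : H →L[ℂ] H) + (starRingEnd ℂ) l • ContinuousLinearMap.adjoint V)) *
          ((1 - V * ContinuousLinearMap.adjoint V) *
            Ring.inverse ((1 : H →L[ℂ] H) + (starRingEnd ℂ) l • ContinuousLinearMap.adjoint V))) := by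
  set A := ContinuousLinearMap.adjoint V with hAdef
  have hsA : star A = V := by
    rw [ContinuousLinearMap.star_eq_adjoint, hAdef, ContinuousLinearMap.adjoint_adjoint]
  set D := (1 : H →L[ℂ] H) + (starRingEnd ℂ) l • A with hDdef
  set N := A + l • (1 : H →L[ℂ] H) with hNdef
  set R := Ring.inverse D with hRdef
  have hc : ‖(starRingEnd ℂ) l‖ < 1 := by rwa [RCLike.norm_conj]
  have hD : IsUnit D := isUnit_D V hV _ hc
  have hDs : IsUnit (star D) := hD.star
  have hsR : star R = Ring.inverse (star D) := star_ringInverse hD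
  have hml : l * (starRingEnd ℂ) l = (‖l‖ : ℂ) ^ 2 := by
    rw [Complex.mul_conj]
    simp [Complex.normSq_eq_norm_sq]
  have hml' : (starRingEnd ℂ) l * l = (‖l‖ : ℂ) ^ 2 := by rw [mul_comm]; exact hml
  have expand : star D * D - star N * N =
      ((1 - ‖l‖ ^ 2 : ℝ) : ℂ) • (1 - V * A) := by
    rw [hDdef, hNdef]
    simp only [star_add, star_smul, star_one, hsA, RCLike.star_def, Complex.conj_conj,
      mul_add, add_mul, one_mul, mul_one, smul_mul_assoc, mul_smul_comm, smul_smul,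
      hml, hml', Complex.ofReal_sub, Complex.ofReal_one, Complex.ofReal_pow]
    match_scalars <;> ring_nf
    · linear_combination -hml
    · linear_combination hml
  have hbb : star (blaschkeFactor V l) * blaschkeFactor V l = star R * (star N * N) * R := by
    show star (N * R) * (N * R) = _
    simp only [star_mul, mul_assoc]
  have hRD : star R * (star D * D) * R = 1 := by
    simp only [← mul_assoc]
    rw [hsR, Ring.inverse_mul_cancel _ hDs, one_mul, hRdef, Ring.mul_inverse_cancel _ hD]
  calc 1 - star (blaschkeFactor V l) * blaschkeFactor V l
      = star R * (star D * D) * R - star R * (star N * N) * R := by rw [hRD, hbb]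
    _ = star R * (star D * D - star N * N) * R := by rw [mul_sub, sub_mul]
    _ = star R * (((1 - ‖l‖ ^ 2 : ℝ) : ℂ) • (1 - V * A)) * R := by rw [expand]
    _ = ((1 - ‖l‖ ^ 2 : ℝ) : ℂ) • (star R * ((1 - V * A) * R)) := by
        rw [mul_smul_comm, smul_mul_assoc, mul_assoc]

lemma main_star (V : H →L[ℂ] H) (hV : ∀ x, ‖V x‖ = ‖x‖) :
    ∀ (d : ℕ) (lam : Fin d → ℂ), (∀ j, ‖lam j‖ < 1) →
      1 - star (blaschkeOp V lam) * blaschkeOp V lam =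
        ∑ j, star (mtOp V lam j) *
          ((1 - V * ContinuousLinearMap.adjoint V) * mtOp V lam j) := by
  intro d
  induction d with
  | zero =>
      intro lam _
      simp [blaschkeOp]
  | succ d IH =>
      intro lam hlam
      set lam' : Fin d → ℂ := fun j => lam j.castSucc with hlam'def
      set b := blaschkeFactor V (lam (Fin.last d)) with hbdef
      set B := blaschkeOp V lam' with hBdef
      have hB : blaschkeOp V lam = B * b := by
        rw [blaschkeOp, List.ofFn_succ', List.prod_concat]
        rfl
      have hcomm : B * b = b * B := by
        have hc : Commute b B := by
          apply Commute.list_prod_right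
          intro x hx
          rw [List.mem_ofFn] at hx
          obtain ⟨i, rfl⟩ := hx
          exact blaschkeFactor_comm V hV _ _ (hlam _) (hlam _)
        exact hc.symm
      have step : 1 - star (blaschkeOp V lam) * blaschkeOp V lam
          = (1 - star B * B) + star B * ((1 - star b * b) * B) := by
        rw [hB, hcomm]
        simp only [star_mul]
        noncomm_ring
      have hmt : mtOp V lam (Fin.last d)
          = ((Real.sqrt (1 - ‖lam (Fin.last d)‖ ^ 2) : ℝ) : ℂ) •
            (Ring.inverse ((1 : H →L[ℂ] H) +
              (starRingEnd ℂ) (lam (Fin.last d)) • ContinuousLinearMap.adjoint V) * B) := rfl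
      have hr0 : (0 : ℝ) ≤ 1 - ‖lam (Fin.last d)‖ ^ 2 := by
        have := hlam (Fin.last d)
        nlinarith [norm_nonneg (lam (Fin.last d))]
      have hrr : ((Real.sqrt (1 - ‖lam (Fin.last d)‖ ^ 2) : ℝ) : ℂ) *
          ((Real.sqrt (1 - ‖lam (Fin.last d)‖ ^ 2) : ℝ) : ℂ)
          = ((1 - ‖lam (Fin.last d)‖ ^ 2 : ℝ) : ℂ) := by
        rw [← Complex.ofReal_mul, Real.mul_self_sqrt hr0]
      have hterm : star B * ((1 - star b * b) * B)
          = star (mtOp V lam (Fin.last d)) *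
            ((1 - V * ContinuousLinearMap.adjoint V) * mtOp V lam (Fin.last d)) := by
        rw [hmt, hbdef, key_factor V hV _ (hlam (Fin.last d))]
        simp only [star_smul, RCLike.star_def, Complex.conj_ofReal, star_mul,
          smul_mul_assoc, mul_smul_comm, smul_smul, hrr, mul_assoc]
      rw [step, IH lam' (fun j => hlam _), hterm, Fin.sum_univ_castSucc]
      rfl
end

theorem stmt8 {H : Type*} [NormedAddCommGroup H] [InnerProductSpace ℂ H] [CompleteSpace H]
    (V : H →L[ℂ] H) (hV : ∀ x, ‖V x‖ = ‖x‖) (d : ℕ) (lam : Fin d → ℂ)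
    (hlam : ∀ j, ‖lam j‖ < 1) :
    1 - ContinuousLinearMap.adjoint (blaschkeOp V lam) * blaschkeOp V lam =
      ∑ j, ContinuousLinearMap.adjoint (mtOp V lam j) *
        ((1 - V * ContinuousLinearMap.adjoint V) * mtOp V lam j) := by
  simpa only [ContinuousLinearMap.star_eq_adjoint] using main_star V hV d lam hlam
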